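/- arXiv:2104.05236 — 4 statements merged into one kernel-verified Lean document; each statement's English description precedes it below -/
import Mathlib

section
/- Let Λ = diag(λ₁,…,λ_s) and Λ_A = diag(α₁,…,α_s) be real diagonal s×s matrices with λ₁ ≥ … ≥ λ_s ≥ 0 and α₁ ≥ … ≥ α_s ≥ 0, and let Q be a unitary s×s complex matrix. Then tr[(I_s + Λ)⁻¹ Q Λ_A Qᴴ] ≥ Σ_{i=1}^{s} α_i/(1+λ_i), with equality when Q = I_s. -/
open Matrix ComplexOrder

lemma ds_key (s : ℕ) (beta alpha : Fin s → ℝ) (hb : Monotone beta) (ha : Antitone alpha)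
    (d : Matrix (Fin s) (Fin s) ℝ) (hd : d ∈ doublyStochastic ℝ (Fin s)) :
    ∑ i, beta i * alpha i ≤ ∑ i, ∑ j, d i j * (beta i * alpha j) := by
  have hav : Antivary beta alpha := by
    intro i j h
    rcases le_total j i with hji | hij
    · exact hb hji
    · exact absurd (ha hij) (not_le.2 h)
  obtain ⟨w, hw0, hw1, hw⟩ := exists_eq_sum_perm_of_mem_doublyStochastic hd
  have expand : ∀ i j, d i j = ∑ σ : Equiv.Perm (Fin s), w σ * (σ.permMatrix ℝ) i j := by
    intro i j
    rw [← hw]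
    simp [Matrix.sum_apply]
  have hperm : ∀ σ : Equiv.Perm (Fin s),
      ∑ i, ∑ j, (σ.permMatrix ℝ) i j * (beta i * alpha j)
        = ∑ i, beta i * alpha (σ i) := by
    intro σ
    refine Finset.sum_congr rfl fun i _ => ?_
    simp [Equiv.Perm.permMatrix, PEquiv.toMatrix_apply, Equiv.toPEquiv_apply,
      Finset.sum_ite_eq]
  have key2 : ∀ σ : Equiv.Perm (Fin s),
      ∑ i, ∑ j, w σ * ((σ.permMatrix ℝ) i j * (beta i * alpha j))
        = w σ * ∑ i, beta i * alpha (σ i) := by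
    intro σ
    rw [← hperm σ, Finset.mul_sum]
    exact Finset.sum_congr rfl fun i _ => (Finset.mul_sum _ _ _).symm
  calc ∑ i, beta i * alpha i
      = ∑ σ : Equiv.Perm (Fin s), w σ * ∑ i, beta i * alpha i := by
        rw [← Finset.sum_mul, hw1, one_mul]
    _ ≤ ∑ σ : Equiv.Perm (Fin s), w σ * ∑ i, beta i * alpha (σ i) := by
        refine Finset.sum_le_sum fun σ _ => mul_le_mul_of_nonneg_left ?_ (hw0 σ)
        exact hav.sum_mul_le_sum_mul_comp_perm
    _ = ∑ σ : Equiv.Perm (Fin s), ∑ i, ∑ j,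
          w σ * ((σ.permMatrix ℝ) i j * (beta i * alpha j)) := by
        exact Finset.sum_congr rfl fun σ _ => (key2 σ).symm
    _ = ∑ i, ∑ σ : Equiv.Perm (Fin s), ∑ j,
          w σ * ((σ.permMatrix ℝ) i j * (beta i * alpha j)) := Finset.sum_comm
    _ = ∑ i, ∑ j, ∑ σ : Equiv.Perm (Fin s),
          w σ * ((σ.permMatrix ℝ) i j * (beta i * alpha j)) := by
        exact Finset.sum_congr rfl fun i _ => Finset.sum_comm
    _ = ∑ i, ∑ j, d i j * (beta i * alpha j) := by
        refine Finset.sum_congr rfl fun i _ => Finset.sum_congr rfl fun j _ => ?_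
        rw [expand i j, Finset.sum_mul]
        exact Finset.sum_congr rfl fun σ _ => by ring

theorem stmt_6 (s : ℕ) (lam alpha : Fin s → ℝ)
    (hlam_mono : Antitone lam) (hlam_nonneg : ∀ i, 0 ≤ lam i)
    (halpha_mono : Antitone alpha) (halpha_nonneg : ∀ i, 0 ≤ alpha i)
    (Q : Matrix (Fin s) (Fin s) ℂ) (hQ : Q ∈ Matrix.unitaryGroup (Fin s) ℂ) :
    (∑ i, ((alpha i / (1 + lam i) : ℝ) : ℂ)) ≤
      ((1 + diagonal (fun i => (lam i : ℂ)))⁻¹ *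
        (Q * diagonal (fun i => (alpha i : ℂ)) * Qᴴ)).trace ∧
    ((1 + diagonal (fun i => (lam i : ℂ)))⁻¹ *
        (diagonal (fun i => (alpha i : ℂ)))).trace =
      ∑ i, ((alpha i / (1 + lam i) : ℝ) : ℂ) := by
  have h1 : ∀ i, (0:ℝ) < 1 + lam i := fun i => by linarith [hlam_nonneg i]
  have hinv : (1 + diagonal (fun i => (lam i : ℂ)))⁻¹
      = diagonal (fun i => ((1 + lam i : ℝ)⁻¹ : ℂ)) := by
    apply Matrix.inv_eq_left_inv
    rw [← Matrix.diagonal_one, Matrix.diagonal_add, Matrix.diagonal_mul_diagonal]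
    have : (fun i => ((1 + lam i : ℝ) : ℂ)⁻¹ * (1 + (lam i : ℂ))) = fun _ => (1:ℂ) := by
      funext i
      rw [show ((1:ℂ) + (lam i : ℂ)) = ((1 + lam i : ℝ) : ℂ) by push_cast; ring]
      exact inv_mul_cancel₀ (by exact_mod_cast (h1 i).ne')
    rw [this]
  rw [hinv]
  have hbmono : Monotone fun i => (1 + lam i)⁻¹ := by
    intro i j hij
    have := hlam_mono hij
    have := h1 i
    have := h1 j
    simp only
    rw [inv_le_inv₀ (h1 i) (h1 j)]
    linarith
  have hrow : ∀ i, ∑ j, Complex.normSq (Q i j) = 1 := by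
    intro i
    have h := Matrix.mem_unitaryGroup_iff.mp hQ
    have h2 := congrArg (fun M => M i i) h
    simp only [Matrix.mul_apply, Matrix.one_apply_eq, Matrix.star_apply] at h2
    have : ((∑ j, Complex.normSq (Q i j) : ℝ) : ℂ) = 1 := by
      rw [← h2]
      push_cast
      exact Finset.sum_congr rfl fun j _ => (Complex.mul_conj _).symm
    exact_mod_cast this
  have hcol : ∀ j, ∑ i, Complex.normSq (Q i j) = 1 := by
    intro j
    have h := Matrix.mem_unitaryGroup_iff'.mp hQ
    have h2 := congrArg (fun M => M j j) h
    simp only [Matrix.mul_apply, Matrix.one_apply_eq, Matrix.star_apply] at h2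
    have : ((∑ i, Complex.normSq (Q i j) : ℝ) : ℂ) = 1 := by
      rw [← h2]
      push_cast
      refine Finset.sum_congr rfl fun i _ => ?_
      rw [← Complex.mul_conj]
      simp only [Complex.star_def]
      ring
    exact_mod_cast this
  have hd : (Matrix.of fun i j => Complex.normSq (Q i j)) ∈ doublyStochastic ℝ (Fin s) := by
    rw [mem_doublyStochastic_iff_sum]
    exact ⟨fun i j => Complex.normSq_nonneg _, fun i => hrow i, fun j => hcol j⟩
  have key := ds_key s (fun i => (1 + lam i)⁻¹) alpha hbmono halpha_mono _ hd
  have htr : ((diagonal fun i => ((1 + lam i : ℝ) : ℂ)⁻¹) *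
        (Q * diagonal (fun i => (alpha i : ℂ)) * Qᴴ)).trace
      = ((∑ i, ∑ j, Complex.normSq (Q i j) * ((1 + lam i)⁻¹ * alpha j) : ℝ) : ℂ) := by
    have entry : ∀ i j, (Q * diagonal (fun k => (alpha k : ℂ)) * Qᴴ) i j
        = ∑ k, Q i k * (alpha k : ℂ) * star (Q j k) := by
      intro i j
      rw [Matrix.mul_apply]
      simp only [Matrix.mul_diagonal, Matrix.conjTranspose_apply]
    rw [Matrix.trace]
    push_cast
    refine Finset.sum_congr rfl fun i _ => ?_
    rw [Matrix.diag_apply, Matrix.diagonal_mul, entry, Finset.mul_sum]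
    refine Finset.sum_congr rfl fun j _ => ?_
    rw [← Complex.mul_conj]
    simp only [Complex.star_def]
    push_cast
    ring
  constructor
  · rw [htr]
    have lhs_eq : (∑ i, ((alpha i / (1 + lam i) : ℝ) : ℂ))
        = ((∑ i, (1 + lam i)⁻¹ * alpha i : ℝ) : ℂ) := by
      push_cast
      exact Finset.sum_congr rfl fun i _ => by rw [div_eq_inv_mul]
    rw [lhs_eq]
    exact Complex.real_le_real.mpr key
  · have : ((diagonal fun i => ((1 + lam i : ℝ) : ℂ)⁻¹) *
        diagonal fun i => ((alpha i : ℝ) : ℂ)) = diagonal fun i => ((alpha i / (1 + lam i) : ℝ) : ℂ) := by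
      rw [Matrix.diagonal_mul_diagonal]
      have hfun : (fun i => ((1 + lam i : ℝ) : ℂ)⁻¹ * ((alpha i : ℝ) : ℂ))
          = fun i => ((alpha i / (1 + lam i) : ℝ) : ℂ) := by
        funext i
        push_cast
        ring
      rw [hfun]
    rw [this, Matrix.trace_diagonal]
end

section
/- Let ρ ≥ 1, let 0 < α_i < 1 and β_i > 0 for i = 1,…,ρ, let P₂ > 0 and ξ > 0, and define x_i = max(0, α_i/2 − 1 + √(α_i²/4 + α_i ξ/β_i)). If Σ_{i=1}^{ρ} β_i x_i = P₂, then x minimizes f(y) = −Σ_{i=1}^{ρ} ln(1 − α_i/(1+y_i)) over the set {y ∈ ℝ^ρ : y_i ≥ 0 for all i, Σ_{i=1}^{ρ} β_i y_i ≤ P₂}; that is, f(x) ≤ f(y) for every such y. -/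
lemma key_ineq (α c t : ℝ) (hα0 : 0 < α) (hα1 : α < 1) (hc : 0 < c) (ht : 0 ≤ t)
    (x : ℝ) (hxdef : x = max 0 (α/2 - 1 + Real.sqrt (α^2/4 + α/c))) :
    Real.log (1 - α / (1 + t)) - c * t ≤ Real.log (1 - α / (1 + x)) - c * x := by
  have hs0 : 0 ≤ Real.sqrt (α^2/4 + α/c) := Real.sqrt_nonneg _
  have hs2 : (Real.sqrt (α^2/4 + α/c))^2 = α^2/4 + α/c := Real.sq_sqrt (by positivity)
  set s := Real.sqrt (α^2/4 + α/c) with hsdef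
  have hx0 : 0 ≤ x := hxdef ▸ le_max_left _ _
  have hxα : 0 < 1 + x - α := by linarith
  have htα : 0 < 1 + t - α := by linarith
  have hx1 : 0 < 1 + x := by linarith
  have ht1 : 0 < 1 + t := by linarith
  have hC : α * (t - x) ≤ c * (1 + x - α) * (1 + t) * (t - x) := by
    rcases le_or_gt (α/2 - 1 + s) 0 with h | h
    · have hx' : x = 0 := by rw [hxdef]; exact max_eq_left h
      have h2 : s^2 ≤ (1 - α/2)^2 := by nlinarith
      have h3 : α ≤ c * (1 - α) := by
        have h4 : α / c ≤ 1 - α := by nlinarith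
        have h5 : α / c * c = α := div_mul_cancel₀ α hc.ne'
        nlinarith
      rw [hx']
      nlinarith [mul_nonneg (mul_nonneg hc.le (by linarith : (0:ℝ) ≤ 1 - α)) ht]
    · have hx' : x = α/2 - 1 + s := by rw [hxdef]; exact max_eq_right h.le
      have heq : c * (1 + x - α) * (1 + x) = α := by
        have h5 : α / c * c = α := div_mul_cancel₀ α hc.ne'
        rw [hx']; nlinarith
      nlinarith [mul_nonneg (mul_pos hc hxα).le (sq_nonneg (t - x))]
  -- log part
  have e1 : Real.log (1 - α / (1 + t)) = Real.log (1 + t - α) - Real.log (1 + t) := by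
    rw [show 1 - α / (1 + t) = (1 + t - α) / (1 + t) by field_simp,
      Real.log_div htα.ne' ht1.ne']
  have e2 : Real.log (1 - α / (1 + x)) = Real.log (1 + x - α) - Real.log (1 + x) := by
    rw [show 1 - α / (1 + x) = (1 + x - α) / (1 + x) by field_simp,
      Real.log_div hxα.ne' hx1.ne']
  have hA : 0 < (1 + t - α) * (1 + x) := mul_pos htα hx1
  have hB : 0 < (1 + x - α) * (1 + t) := mul_pos hxα ht1
  have hAB : Real.log ((1 + t - α) * (1 + x)) - Real.log ((1 + x - α) * (1 + t)) ≤
      (1 + t - α) * (1 + x) / ((1 + x - α) * (1 + t)) - 1 := by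
    have := Real.log_le_sub_one_of_pos (div_pos hA hB)
    rwa [Real.log_div hA.ne' hB.ne'] at this
  have hfrac : (1 + t - α) * (1 + x) / ((1 + x - α) * (1 + t)) - 1 =
      α * (t - x) / ((1 + x - α) * (1 + t)) := by
    field_simp; ring
  have hlast : α * (t - x) / ((1 + x - α) * (1 + t)) ≤ c * (t - x) := by
    rw [div_le_iff₀ hB]; nlinarith
  rw [Real.log_mul htα.ne' hx1.ne', Real.log_mul hxα.ne' ht1.ne'] at hAB
  rw [e1, e2]; linarith [hAB.trans (hfrac ▸ hlast)]

theorem stmt_11 (ρ : ℕ) (hρ : 1 ≤ ρ) (α β : Fin ρ → ℝ)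
    (hα : ∀ i, 0 < α i ∧ α i < 1) (hβ : ∀ i, 0 < β i)
    (P₂ : ℝ) (hP₂ : 0 < P₂) (ξ : ℝ) (hξ : 0 < ξ)
    (x : Fin ρ → ℝ)
    (hx : ∀ i, x i = max 0 (α i / 2 - 1 + Real.sqrt (α i ^ 2 / 4 + α i * ξ / β i)))
    (hpow : ∑ i, β i * x i = P₂) :
    ∀ y : Fin ρ → ℝ, (∀ i, 0 ≤ y i) → (∑ i, β i * y i) ≤ P₂ →
      (-∑ i, Real.log (1 - α i / (1 + x i))) ≤ -∑ i, Real.log (1 - α i / (1 + y i)) := by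
  intro y hy hyP
  have hterm : ∀ i, Real.log (1 - α i / (1 + y i)) - (β i / ξ) * y i ≤
      Real.log (1 - α i / (1 + x i)) - (β i / ξ) * x i := by
    intro i
    refine key_ineq (α i) (β i / ξ) (y i) (hα i).1 (hα i).2
      (div_pos (hβ i) hξ) (hy i) (x i) ?_
    rw [hx i, div_div_eq_mul_div]
  have hsum := Finset.sum_le_sum (s := Finset.univ) (fun i _ => hterm i)
  rw [Finset.sum_sub_distrib, Finset.sum_sub_distrib] at hsum
  have hrw : ∀ z : Fin ρ → ℝ, ∑ i, (β i / ξ) * z i = (∑ i, β i * z i) / ξ := by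
    intro z
    rw [Finset.sum_div]
    exact Finset.sum_congr rfl (fun i _ => by ring)
  rw [hrw x, hrw y, hpow] at hsum
  have h1 : (∑ i, β i * y i) / ξ ≤ P₂ / ξ := by
    gcongr
  linarith
end

section
/- Let ρ ≥ 1, let α_i > 0 and β_i > 0 for i = 1,…,ρ, let P₂ > 0 and ξ > 0, and define x_i = max(0, ξ √(α_i/β_i) − 1). If Σ_{i=1}^{ρ} β_i x_i = P₂, then x minimizes g(y) = Σ_{i=1}^{ρ} α_i/(1+y_i) over the set {y ∈ ℝ^ρ : y_i ≥ 0 for all i, Σ_{i=1}^{ρ} β_i y_i ≤ P₂}; that is, g(x) ≤ g(y) for every such y. -/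
lemma waterfill_key (α β ξ t : ℝ) (hα : 0 < α) (hβ : 0 < β) (hξ : 0 < ξ)
    (ht : 0 ≤ t) :
    α / (1 + max 0 (ξ * Real.sqrt (α / β) - 1))
        + β * max 0 (ξ * Real.sqrt (α / β) - 1) / ξ ^ 2
      ≤ α / (1 + t) + β * t / ξ ^ 2 := by
  set s := Real.sqrt (α / β) with hsdef
  have hs0 : 0 < s := Real.sqrt_pos.2 (div_pos hα hβ)
  have hs2 : s ^ 2 = α / β := Real.sq_sqrt (le_of_lt (div_pos hα hβ))
  have hαs : α = β * s ^ 2 := by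
    field_simp at hs2; linarith
  have ht1 : (0:ℝ) < 1 + t := by linarith
  have hA : α / (1 + t) * (1 + t) = α := div_mul_cancel₀ _ (ne_of_gt ht1)
  have hAle : α / (1 + t) ≤ α := div_le_self hα.le (by linarith)
  have hApos : 0 < α / (1 + t) := div_pos hα ht1
  rcases le_or_gt (ξ * s) 1 with h | h
  · have hmax : max 0 (ξ * s - 1) = 0 := max_eq_left (by linarith)
    rw [hmax]
    have hξs1 : (ξ * s) ^ 2 ≤ 1 := by nlinarith [mul_pos hξ hs0]
    have hαξ : α * ξ ^ 2 ≤ β := by nlinarith [mul_le_mul_of_nonneg_left hξs1 hβ.le]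
    have : α ≤ α / (1 + t) + β * t / ξ ^ 2 := by
      rw [div_add_div _ _ (ne_of_gt ht1) (by positivity), le_div_iff₀ (by positivity)]
      nlinarith [mul_nonneg ht (sub_nonneg.2 hαξ), mul_nonneg (mul_nonneg ht ht) hβ.le]
    simpa using this
  · have hmax : max 0 (ξ * s - 1) = ξ * s - 1 := max_eq_right (by linarith)
    rw [hmax]
    have h1 : 1 + (ξ * s - 1) = ξ * s := by ring
    rw [h1]
    have hξs : 0 < ξ * s := by positivity
    rw [div_add_div _ _ (ne_of_gt hξs) (by positivity),
        div_add_div _ _ (ne_of_gt ht1) (by positivity),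
        div_le_div_iff₀ (by positivity) (by positivity)]
    rw [hαs]
    nlinarith [mul_nonneg (mul_pos (mul_pos hβ (pow_pos hξ 2)) hξs).le (sq_nonneg (ξ * s - (1 + t))), hαs]

theorem stmt_14 (ρ : ℕ) (hρ : 1 ≤ ρ) (α β : Fin ρ → ℝ)
    (hα : ∀ i, 0 < α i) (hβ : ∀ i, 0 < β i)
    (P₂ : ℝ) (hP₂ : 0 < P₂) (ξ : ℝ) (hξ : 0 < ξ)
    (x : Fin ρ → ℝ) (hx : ∀ i, x i = max 0 (ξ * Real.sqrt (α i / β i) - 1))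
    (hpow : ∑ i, β i * x i = P₂) :
    ∀ y : Fin ρ → ℝ, (∀ i, 0 ≤ y i) → (∑ i, β i * y i) ≤ P₂ →
      (∑ i, α i / (1 + x i)) ≤ ∑ i, α i / (1 + y i) := by
  intro y hy hsum
  have pointwise : ∀ i : Fin ρ,
      α i / (1 + x i) + β i * x i / ξ ^ 2 ≤ α i / (1 + y i) + β i * y i / ξ ^ 2 := by
    intro i
    rw [hx i]
    exact waterfill_key (α i) (β i) ξ (y i) (hα i) (hβ i) hξ (hy i)
  have hsum2 : ∑ i, (α i / (1 + x i) + β i * x i / ξ ^ 2)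
      ≤ ∑ i, (α i / (1 + y i) + β i * y i / ξ ^ 2) :=
    Finset.sum_le_sum fun i _ => pointwise i
  rw [Finset.sum_add_distrib, Finset.sum_add_distrib, ← Finset.sum_div, ← Finset.sum_div,
      hpow] at hsum2
  have : (∑ i, β i * y i) / ξ ^ 2 ≤ P₂ / ξ ^ 2 := by
    apply div_le_div_of_nonneg_right hsum (by positivity) |>.trans_eq rfl
  linarith
end

section
/- Let A be a Hermitian positive semidefinite s×s complex matrix with eigenvalues α₁ ≥ α₂ ≥ … ≥ α_s in nonincreasing order, let B be a Hermitian positive semidefinite u×u complex matrix, and let X be any u×s complex matrix with λ₁ ≥ λ₂ ≥ … ≥ λ_s the eigenvalues of Xᴴ B X in nonincreasing order. Then tr[A (I_s + Xᴴ B X)⁻¹] ≥ Σ_{i=1}^{s} α_i/(1+λ_i). -/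
open Finset

-- coefficient comparison
lemma coef_bound (s : ℕ) (p : ℕ → ℕ → ℝ) (hp0 : ∀ i j, 0 ≤ p i j)
    (hrow : ∀ i, i < s → ∑ j ∈ range s, p i j = 1)
    (hcol : ∀ j, j < s → ∑ i ∈ range s, p i j = 1)
    (k l : ℕ) (hk : k < s) (hl : l < s) :
    (((Finset.Icc l k).card : ℝ)) ≤ ∑ i ∈ range (k+1), ∑ j ∈ Ico l s, p i j := by
  rcases le_or_gt l k with h | h
  · rw [Nat.card_Icc]
    have hstep : ∀ i ∈ range (k+1), ∑ j ∈ Ico l s, p i j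
        = 1 - ∑ j ∈ range l, p i j := by
      intro i hi
      rw [Finset.sum_Ico_eq_sub _ (le_of_lt hl), hrow i (lt_of_lt_of_le (mem_range.mp hi) hk)]
    rw [Finset.sum_congr rfl hstep, Finset.sum_sub_distrib, Finset.sum_const, nsmul_eq_mul,
      card_range]
    have h1 : ∑ i ∈ range (k+1), ∑ j ∈ range l, p i j
        ≤ ∑ i ∈ range s, ∑ j ∈ range l, p i j := by
      apply Finset.sum_le_sum_of_subset_of_nonneg (Finset.range_subset_range.mpr hk)
      intro i _ _
      exact Finset.sum_nonneg fun j _ => hp0 i j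
    have h2 : ∑ i ∈ range s, ∑ j ∈ range l, p i j = l := by
      rw [Finset.sum_comm]
      rw [Finset.sum_congr rfl (fun j hj => hcol j (lt_of_lt_of_le (mem_range.mp hj) hl.le))]
      simp
    have hcast : (↑(k + 1 - l) : ℝ) = (k+1 : ℝ) - l := by
      have : l ≤ k + 1 := by omega
      push_cast [this]; ring
    rw [hcast]
    push_cast
    linarith
  · rw [Finset.Icc_eq_empty (by omega)]
    simp only [card_empty, Nat.cast_zero]
    exact Finset.sum_nonneg fun i _ => Finset.sum_nonneg fun j _ => hp0 i j

lemma ds_rearrange (s : ℕ) (a b : ℕ → ℝ)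
    (ha : ∀ k, a (k+1) ≤ a k) (ha0 : ∀ k, 0 ≤ a k) (has : a s = 0)
    (hb : ∀ k, k + 1 < s → b k ≤ b (k+1)) (hb0 : ∀ k, 0 ≤ b k)
    (p : ℕ → ℕ → ℝ) (hp0 : ∀ i j, 0 ≤ p i j)
    (hrow : ∀ i, i < s → ∑ j ∈ range s, p i j = 1)
    (hcol : ∀ j, j < s → ∑ i ∈ range s, p i j = 1) :
    ∑ i ∈ range s, a i * b i ≤ ∑ i ∈ range s, ∑ j ∈ range s, p i j * (a i * b j) := by
  set dA : ℕ → ℝ := fun k => a k - a (k+1) with hdA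
  set bb : ℕ → ℝ := fun n => Nat.rec 0 (fun m _ => b m) n with hbb
  set dB : ℕ → ℝ := fun l => bb (l+1) - bb l with hdB
  have hdA0 : ∀ k, 0 ≤ dA k := fun k => sub_nonneg.mpr (ha k)
  have hdB0 : ∀ l, l < s → 0 ≤ dB l := by
    intro l hl
    match l with
    | 0 => simpa [hdB, hbb] using hb0 0
    | Nat.succ m => simpa [hdB, hbb] using
        (sub_nonneg.mpr (hb m hl))
  -- expansion of a
  have ha_exp : ∀ i ∈ range s, a i = ∑ k ∈ range s, (if i ≤ k then dA k else 0) := by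
    intro i hi
    rw [Finset.sum_ite, Finset.sum_const_zero, add_zero]
    have hfil : (range s).filter (fun k => i ≤ k) = Finset.Ico i s := by
      ext k; simp [Finset.mem_filter, Finset.mem_range, Finset.mem_Ico, and_comm]
    rw [hfil, Finset.sum_Ico_eq_sum_range]
    simp only [hdA]
    have key : ∑ m ∈ range (s-i), (a (i+m) - a (i+m+1)) = a (i + 0) - a (i + (s - i)) := by
      rw [← Finset.sum_range_sub' (fun m => a (i + m)) (s - i)]
      exact Finset.sum_congr rfl fun m _ => by rw [← Nat.add_assoc]
    rw [show (fun x => a (i + x) - a (i + x + 1)) = (fun x => a (i+x) - a (i+x+1)) from rfl]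
    rw [key, Nat.add_sub_cancel' (le_of_lt (mem_range.mp hi)), Nat.add_zero, has, sub_zero]
  -- expansion of b
  have hb_exp : ∀ j ∈ range s, b j = ∑ l ∈ range s, (if l ≤ j then dB l else 0) := by
    intro j hj
    rw [Finset.sum_ite, Finset.sum_const_zero, add_zero]
    have hjs := mem_range.mp hj
    have hfil : (range s).filter (fun l => l ≤ j) = Finset.range (j+1) := by
      ext l
      simp only [Finset.mem_filter, Finset.mem_range]
      omega
    rw [hfil]
    simp only [hdB]
    rw [Finset.sum_range_sub bb (j+1)]
    simp [hbb]
  have hLHS : ∑ i ∈ range s, a i * b i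
      = ∑ k ∈ range s, ∑ l ∈ range s, dA k * dB l * ((Finset.Icc l k).card : ℝ) := by
    calc ∑ i ∈ range s, a i * b i
        = ∑ i ∈ range s, ∑ k ∈ range s, ∑ l ∈ range s,
            (if i ≤ k then dA k else 0) * (if l ≤ i then dB l else 0) := by
          refine Finset.sum_congr rfl fun i hi => ?_
          rw [ha_exp i hi, hb_exp i hi, Finset.sum_mul_sum]
      _ = ∑ k ∈ range s, ∑ l ∈ range s, ∑ i ∈ range s,
            (if i ≤ k then dA k else 0) * (if l ≤ i then dB l else 0) := by
          rw [Finset.sum_comm]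
          exact Finset.sum_congr rfl fun k _ => Finset.sum_comm
      _ = _ := by
          refine Finset.sum_congr rfl fun k hk => Finset.sum_congr rfl fun l hl => ?_
          have hterm : ∀ i, (if i ≤ k then dA k else 0) * (if l ≤ i then dB l else 0)
              = if i ∈ Finset.Icc l k then dA k * dB l else 0 := by
            intro i
            by_cases h1 : i ≤ k <;> by_cases h2 : l ≤ i <;>
              simp [h1, h2, Finset.mem_Icc]
          simp_rw [hterm]
          rw [Finset.sum_ite_mem, Finset.sum_const, nsmul_eq_mul]
          have hsub : range s ∩ Finset.Icc l k = Finset.Icc l k := by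
            apply Finset.inter_eq_right.mpr
            intro x hx
            simp only [Finset.mem_Icc] at hx
            exact mem_range.mpr (lt_of_le_of_lt hx.2 (mem_range.mp hk))
          rw [hsub]; ring
  have hRHS : ∑ i ∈ range s, ∑ j ∈ range s, p i j * (a i * b j)
      = ∑ k ∈ range s, ∑ l ∈ range s, dA k * dB l *
          (∑ i ∈ range (k+1), ∑ j ∈ Finset.Ico l s, p i j) := by
    calc ∑ i ∈ range s, ∑ j ∈ range s, p i j * (a i * b j)
        = ∑ i ∈ range s, ∑ j ∈ range s, ∑ k ∈ range s, ∑ l ∈ range s,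
            (if i ≤ k then (if l ≤ j then dA k * dB l * p i j else 0) else 0) := by
          refine Finset.sum_congr rfl fun i hi => Finset.sum_congr rfl fun j hj => ?_
          rw [ha_exp i hi, hb_exp j hj, Finset.sum_mul_sum, Finset.mul_sum]
          refine Finset.sum_congr rfl fun k _ => ?_
          rw [Finset.mul_sum]
          refine Finset.sum_congr rfl fun l _ => ?_
          by_cases h1 : i ≤ k <;> by_cases h2 : l ≤ j <;> simp [h1, h2] <;> ring
      _ = ∑ k ∈ range s, ∑ l ∈ range s, ∑ i ∈ range s, ∑ j ∈ range s,
            (if i ≤ k then (if l ≤ j then dA k * dB l * p i j else 0) else 0) := by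
          set F : ℕ → ℕ → ℕ → ℕ → ℝ := fun i j k l =>
            if i ≤ k then (if l ≤ j then dA k * dB l * p i j else 0) else 0 with hF
          calc ∑ i ∈ range s, ∑ j ∈ range s, ∑ k ∈ range s, ∑ l ∈ range s, F i j k l
              = ∑ i ∈ range s, ∑ k ∈ range s, ∑ j ∈ range s, ∑ l ∈ range s, F i j k l :=
                Finset.sum_congr rfl fun i _ => Finset.sum_comm
            _ = ∑ k ∈ range s, ∑ i ∈ range s, ∑ j ∈ range s, ∑ l ∈ range s, F i j k l :=
                Finset.sum_comm
            _ = ∑ k ∈ range s, ∑ i ∈ range s, ∑ l ∈ range s, ∑ j ∈ range s, F i j k l :=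
                Finset.sum_congr rfl fun k _ => Finset.sum_congr rfl fun i _ =>
                  Finset.sum_comm
            _ = ∑ k ∈ range s, ∑ l ∈ range s, ∑ i ∈ range s, ∑ j ∈ range s, F i j k l :=
                Finset.sum_congr rfl fun k _ => Finset.sum_comm
      _ = _ := by
          refine Finset.sum_congr rfl fun k hk => Finset.sum_congr rfl fun l hl => ?_
          have hfil1 : (range s).filter (fun i => i ≤ k) = range (k+1) := by
            ext i
            simp only [Finset.mem_filter, Finset.mem_range]
            have := mem_range.mp hk; omega
          have hfil2 : (range s).filter (fun j => l ≤ j) = Finset.Ico l s := by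
            ext j
            simp [Finset.mem_filter, Finset.mem_range, Finset.mem_Ico, and_comm]
          have hinner : ∀ i, ∑ j ∈ range s,
              (if i ≤ k then (if l ≤ j then dA k * dB l * p i j else 0) else 0)
              = if i ≤ k then dA k * dB l * ∑ j ∈ Finset.Ico l s, p i j else 0 := by
            intro i
            split
            · rw [Finset.sum_ite, Finset.sum_const_zero, add_zero, hfil2, Finset.mul_sum]
            · simp
          simp_rw [hinner]
          rw [Finset.sum_ite, Finset.sum_const_zero, add_zero, hfil1, Finset.mul_sum]
  rw [hLHS, hRHS]
  refine Finset.sum_le_sum fun k hk => Finset.sum_le_sum fun l hl => ?_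
  exact mul_le_mul_of_nonneg_left
    (coef_bound s p hp0 hrow hcol k l (mem_range.mp hk) (mem_range.mp hl))
    (mul_nonneg (hdA0 k) (hdB0 l (mem_range.mp hl)))

open Matrix ComplexOrder

theorem stmt_16 (s u : ℕ)
    (A : Matrix (Fin s) (Fin s) ℂ) (hA : A.PosSemidef)
    (B : Matrix (Fin u) (Fin u) ℂ) (hB : B.PosSemidef)
    (X : Matrix (Fin u) (Fin s) ℂ) (hM : (Xᴴ * B * X).IsHermitian)
    (alpha : Fin s → ℝ) (halpha_mono : Antitone alpha)
    (halpha_eig : ∃ σ : Equiv.Perm (Fin s), alpha = hA.1.eigenvalues ∘ σ)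
    (lam : Fin s → ℝ) (hlam_mono : Antitone lam)
    (hlam_eig : ∃ σ : Equiv.Perm (Fin s), lam = hM.eigenvalues ∘ σ) :
    (∑ i, ((alpha i / (1 + lam i) : ℝ) : ℂ)) ≤ (A * (1 + Xᴴ * B * X)⁻¹).trace := by
  obtain ⟨σ₁, hσ₁⟩ := halpha_eig
  obtain ⟨σ₂, hσ₂⟩ := hlam_eig
  have hM' : (Xᴴ * B * X).PosSemidef := hB.conjTranspose_mul_mul_same X
  set μ : Fin s → ℝ := hM.eigenvalues with hμ
  have hμ0 : ∀ j, 0 ≤ μ j := fun j => hM'.eigenvalues_nonneg j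
  set αt : Fin s → ℝ := hA.1.eigenvalues with hαt
  have hαt0 : ∀ i, 0 ≤ αt i := fun i => hA.eigenvalues_nonneg i
  set U : Matrix (Fin s) (Fin s) ℂ := ↑(hM.eigenvectorUnitary) with hUdef
  set V : Matrix (Fin s) (Fin s) ℂ := ↑(hA.1.eigenvectorUnitary) with hVdef
  have hU1 : star U * U = 1 := Unitary.star_mul_self_of_mem (hM.eigenvectorUnitary).2
  have hU2 : U * star U = 1 := Unitary.mul_star_self_of_mem (hM.eigenvectorUnitary).2
  have hV1 : star V * V = 1 := Unitary.star_mul_self_of_mem (hA.1.eigenvectorUnitary).2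
  have hV2 : V * star V = 1 := Unitary.mul_star_self_of_mem (hA.1.eigenvectorUnitary).2
  have hMspec : Xᴴ * B * X = U * diagonal (RCLike.ofReal ∘ μ) * star U :=
    hM.spectral_theorem
  have hAspec : A = V * diagonal (RCLike.ofReal ∘ αt) * star V := hA.1.spectral_theorem
  set γ : Fin s → ℝ := fun j => (1 + μ j)⁻¹ with hγ
  have hpos : ∀ j, (0:ℝ) < 1 + μ j := fun j => by have := hμ0 j; linarith
  -- inverse formula
  have hone : (1 : Matrix (Fin s) (Fin s) ℂ) + Xᴴ * B * X
      = U * diagonal (RCLike.ofReal ∘ fun j => 1 + μ j) * star U := by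
    have : (diagonal (RCLike.ofReal ∘ fun j => 1 + μ j) : Matrix (Fin s) (Fin s) ℂ)
        = 1 + diagonal (RCLike.ofReal ∘ μ) := by
      ext i j
      rcases eq_or_ne i j with rfl | h
      · simp
      · simp [Matrix.diagonal_apply_ne _ h, Matrix.one_apply_ne h]
    rw [this, mul_add, add_mul, mul_one, hU2, hMspec]
  have hinv : (1 + Xᴴ * B * X)⁻¹ = U * diagonal (RCLike.ofReal ∘ γ) * star U := by
    apply inv_eq_right_inv
    rw [hone]
    calc U * diagonal (RCLike.ofReal ∘ fun j => 1 + μ j) * star U *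
          (U * diagonal (RCLike.ofReal ∘ γ) * star U)
        = U * (diagonal (RCLike.ofReal ∘ fun j => 1 + μ j) * (star U * U)
            * diagonal (RCLike.ofReal ∘ γ)) * star U := by
          simp only [Matrix.mul_assoc]
      _ = U * (diagonal (RCLike.ofReal ∘ fun j => 1 + μ j)
            * diagonal (RCLike.ofReal ∘ γ)) * star U := by rw [hU1, mul_one]
      _ = 1 := by
          rw [diagonal_mul_diagonal]
          have : (fun j => (RCLike.ofReal ∘ fun j => 1 + μ j) j * (RCLike.ofReal ∘ γ) j)
              = fun _ : Fin s => (1 : ℂ) := by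
            funext j
            simp only [Function.comp_apply, hγ]
            rw [← RCLike.ofReal_mul, mul_inv_cancel₀ (ne_of_gt (hpos j))]
            simp
          rw [this, diagonal_one, mul_one, hU2]
  set W : Matrix (Fin s) (Fin s) ℂ := star V * U with hW
  have hW1 : W * star W = 1 := by
    rw [hW, StarMul.star_mul, star_star]
    calc star V * U * (star U * V) = star V * (U * star U * V) := by
          simp only [Matrix.mul_assoc]
      _ = 1 := by rw [hU2, Matrix.one_mul, hV1]
  have hW2 : star W * W = 1 := by
    rw [hW, StarMul.star_mul, star_star]
    calc star U * V * (star V * U) = star U * (V * star V * U) := by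
          simp only [Matrix.mul_assoc]
      _ = 1 := by rw [hV2, Matrix.one_mul, hU1]
  have hconj : A * (1 + Xᴴ * B * X)⁻¹
      = V * (diagonal (RCLike.ofReal ∘ αt) * W * diagonal (RCLike.ofReal ∘ γ) * star W)
        * star V := by
    rw [hAspec, hinv, hW, StarMul.star_mul, star_star]
    simp only [Matrix.mul_assoc]
    rw [hV2, Matrix.mul_one]
  have htrace1 : (A * (1 + Xᴴ * B * X)⁻¹).trace
      = (diagonal (RCLike.ofReal ∘ αt) * W * diagonal (RCLike.ofReal ∘ γ) * star W).trace := by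
    rw [hconj, trace_mul_cycle, ← Matrix.mul_assoc, hV1, Matrix.one_mul]
  set p : Fin s → Fin s → ℝ := fun i j => Complex.normSq (W i j) with hp
  have hp0 : ∀ i j, 0 ≤ p i j := fun i j => Complex.normSq_nonneg _
  have htrace2 : (diagonal (RCLike.ofReal ∘ αt) * W * diagonal (RCLike.ofReal ∘ γ)
      * star W).trace = ((∑ i, ∑ j, αt i * γ j * p i j : ℝ) : ℂ) := by
    rw [Matrix.trace]
    push_cast
    refine Finset.sum_congr rfl fun i _ => ?_
    rw [Matrix.diag_apply, Matrix.mul_apply]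
    refine Finset.sum_congr rfl fun j _ => ?_
    rw [Matrix.mul_diagonal, Matrix.diagonal_mul, Matrix.star_apply]
    have : ((p i j : ℝ) : ℂ) = W i j * star (W i j) := by
      rw [hp]
      simp only [Complex.star_def]
      exact (Complex.mul_conj _).symm
    rw [show ((Complex.normSq (W i j) : ℝ) : ℂ) = W i j * star (W i j) from this]
    have hrc : ∀ x : ℝ, (RCLike.ofReal x : ℂ) = Complex.ofReal x := fun _ => rfl
    simp only [Function.comp_apply, hrc, hγ]
    push_cast
    ring
  have hrowp : ∀ i, ∑ j, p i j = 1 := by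
    intro i
    have h1 := congrArg (fun N : Matrix (Fin s) (Fin s) ℂ => N i i) hW1
    simp only [Matrix.mul_apply, Matrix.star_apply, Matrix.one_apply_eq] at h1
    have hc : ((∑ j, p i j : ℝ) : ℂ) = ((1:ℝ) : ℂ) := by
      push_cast
      rw [← h1]
      refine Finset.sum_congr rfl fun j _ => ?_
      rw [hp]
      simp only [Complex.star_def]
      exact (Complex.mul_conj _).symm
    exact_mod_cast hc
  have hcolp : ∀ j, ∑ i, p i j = 1 := by
    intro j
    have h1 := congrArg (fun N : Matrix (Fin s) (Fin s) ℂ => N j j) hW2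
    simp only [Matrix.mul_apply, Matrix.star_apply, Matrix.one_apply_eq] at h1
    have hc : ((∑ i, p i j : ℝ) : ℂ) = ((1:ℝ) : ℂ) := by
      push_cast
      rw [← h1]
      refine Finset.sum_congr rfl fun i _ => ?_
      rw [hp, mul_comm]
      simp only [Complex.star_def]
      exact (Complex.mul_conj _).symm
    exact_mod_cast hc
  rw [htrace1, htrace2]
  have hgoalL : (∑ i, ((alpha i / (1 + lam i) : ℝ) : ℂ))
      = ((∑ i, alpha i / (1 + lam i) : ℝ) : ℂ) := by push_cast; rfl
  rw [hgoalL, Complex.real_le_real]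
  -- nonnegativity facts
  have halpha0 : ∀ i, 0 ≤ alpha i := fun i => by rw [hσ₁]; exact hαt0 _
  have hlam0 : ∀ i, 0 ≤ lam i := fun i => by rw [hσ₂]; exact hμ0 _
  have hlpos : ∀ i, (0:ℝ) < 1 + lam i := fun i => by have := hlam0 i; linarith
  set q : Fin s → Fin s → ℝ := fun i j => p (σ₁ i) (σ₂ j) with hq
  have hT : (∑ i, ∑ j, αt i * γ j * p i j)
      = ∑ i, ∑ j, alpha i * ((1 + lam j)⁻¹) * q i j := by
    rw [← Equiv.sum_comp σ₁ (fun i => ∑ j, αt i * γ j * p i j)]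
    refine Finset.sum_congr rfl fun i _ => ?_
    rw [← Equiv.sum_comp σ₂ (fun j => αt (σ₁ i) * γ j * p (σ₁ i) j)]
    refine Finset.sum_congr rfl fun j _ => ?_
    rw [hσ₁, hσ₂]
    simp only [hγ, hq, Function.comp_apply]
  rw [hT]
  have hrowq : ∀ i, ∑ j, q i j = 1 := fun i => by
    rw [show (∑ j, q i j) = ∑ j, p (σ₁ i) (σ₂ j) from rfl,
      Equiv.sum_comp σ₂ (fun j => p (σ₁ i) j), hrowp]
  have hcolq : ∀ j, ∑ i, q i j = 1 := fun j => by
    rw [show (∑ i, q i j) = ∑ i, p (σ₁ i) (σ₂ j) from rfl,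
      Equiv.sum_comp σ₁ (fun i => p i (σ₂ j)), hcolp]
  have hq0 : ∀ i j, 0 ≤ q i j := fun i j => hp0 _ _
  -- bridge to ℕ-indexed sums
  set a' : ℕ → ℝ := fun n => if h : n < s then alpha ⟨n, h⟩ else 0 with ha'
  set b' : ℕ → ℝ := fun n => if h : n < s then (1 + lam ⟨n, h⟩)⁻¹ else 0 with hb'
  set p' : ℕ → ℕ → ℝ := fun m n =>
    if h : m < s ∧ n < s then q ⟨m, h.1⟩ ⟨n, h.2⟩ else 0 with hp'
  have key := ds_rearrange s a' b'
    (by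
      intro k
      by_cases h1 : k + 1 < s
      · have h0 : k < s := by omega
        simp only [ha', dif_pos h1, dif_pos h0]
        exact halpha_mono (by simp [Fin.mk_le_mk])
      · by_cases h0 : k < s
        · simp only [ha', dif_pos h0, dif_neg h1]
          exact halpha0 _
        · simp [ha', h0, h1])
    (by
      intro k
      by_cases h : k < s
      · simp only [ha', dif_pos h]; exact halpha0 _
      · simp [ha', h])
    (by simp [ha'])
    (by
      intro k h1
      have h0 : k < s := by omega
      simp only [hb', dif_pos h1, dif_pos h0]
      exact inv_anti₀ (hlpos ⟨k+1, h1⟩)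
        (by have := hlam_mono (show (⟨k, h0⟩ : Fin s) ≤ ⟨k+1, h1⟩ by simp [Fin.mk_le_mk]);
            linarith))
    (by
      intro k
      by_cases h : k < s
      · simp only [hb', dif_pos h]; exact le_of_lt (inv_pos.mpr (hlpos _))
      · simp [hb', h])
    p'
    (by
      intro i j
      by_cases h : i < s ∧ j < s
      · simp only [hp', dif_pos h]; exact hq0 _ _
      · simp [hp', h])
    (by
      intro i hi
      rw [← Fin.sum_univ_eq_sum_range (fun n => p' i n) s]
      have : ∀ j : Fin s, p' i ↑j = q ⟨i, hi⟩ j := by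
        intro j
        simp only [hp', dif_pos (And.intro hi j.isLt)]
      rw [Finset.sum_congr rfl fun j _ => this j]
      exact hrowq _)
    (by
      intro j hj
      rw [← Fin.sum_univ_eq_sum_range (fun n => p' n j) s]
      have : ∀ i : Fin s, p' ↑i j = q i ⟨j, hj⟩ := by
        intro i
        simp only [hp', dif_pos (And.intro i.isLt hj)]
      rw [Finset.sum_congr rfl fun i _ => this i]
      exact hcolq _)
  have hL : (∑ i, alpha i / (1 + lam i)) = ∑ i ∈ Finset.range s, a' i * b' i := by
    rw [← Fin.sum_univ_eq_sum_range (fun n => a' n * b' n) s]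
    refine Finset.sum_congr rfl fun i _ => ?_
    simp only [ha', hb', dif_pos i.isLt]
    rw [div_eq_mul_inv]
  have hR : (∑ i, ∑ j, alpha i * ((1 + lam j)⁻¹) * q i j)
      = ∑ i ∈ Finset.range s, ∑ j ∈ Finset.range s, p' i j * (a' i * b' j) := by
    rw [← Fin.sum_univ_eq_sum_range (fun m => ∑ n ∈ Finset.range s, p' m n * (a' m * b' n)) s]
    refine Finset.sum_congr rfl fun i _ => ?_
    rw [← Fin.sum_univ_eq_sum_range (fun n => p' ↑i n * (a' ↑i * b' n)) s]
    refine Finset.sum_congr rfl fun j _ => ?_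
    simp only [hp', ha', hb', dif_pos i.isLt, dif_pos j.isLt,
      dif_pos (And.intro i.isLt j.isLt)]
    ring
  rw [hL, hR]
  exact key
end
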